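/- Let p be prime, m ≥ 1, and let {e₁,...,e_m} be a basis of F_{p^m} over F_p together with a trace function tr: F_{p^m} → F_p satisfying tr(e_t e_s) = δ_{ts}. Let C ⊆ F_{p^m}^N be an additive code, Λ(C) ⊆ R^{Nm} its Construction A lattice via coordinate expansion in the basis (scaled by 1/√p), and let b(λ,λ') = λ g λ'^T for a symmetric unimodular integer matrix g whose entries reduce mod p to the Gram matrix of a symmetric bilinear form β on F_{p^m}^N. Then Λ(C) is self-dual with respect to b if and only if C is self-dual with respect to β. -/

import Mathlib

open scoped BigOperators

noncomputable section

/-- Construction A lattice of an additive code over `F_{p^m}`: expand codeword coordinates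
in the basis `e`, lift the `F_p`-coefficients to integers, and scale by `1/√p`. -/
def latticeF (p m N : ℕ) [Fact p.Prime]
    (e : Module.Basis (Fin m) (ZMod p) (GaloisField p m))
    (C : Set (Fin N → GaloisField p m)) : Set (Fin N × Fin m → ℝ) :=
  { lam | ∃ c ∈ C, ∃ l : Fin N × Fin m → ℤ, ∀ x : Fin N × Fin m,
      lam x = (((e.repr (c x.1) x.2).val : ℝ) + p * l x) / Real.sqrt p }

/-- Bilinear form on `ℝ^{Nm}` given by an integer Gram matrix `g`. -/
def bForm {N m : ℕ} (g : Matrix (Fin N × Fin m) (Fin N × Fin m) ℤ)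
    (lam lam' : Fin N × Fin m → ℝ) : ℝ :=
  ∑ x, ∑ y, lam x * (g x y : ℝ) * lam' y

/-- Dual lattice with respect to `bForm g`. -/
def dualLatticeF {N m : ℕ} (g : Matrix (Fin N × Fin m) (Fin N × Fin m) ℤ)
    (Λ : Set (Fin N × Fin m → ℝ)) : Set (Fin N × Fin m → ℝ) :=
  { y | ∀ x ∈ Λ, ∃ z : ℤ, bForm g x y = z }

/-! Write `Λ(C) = {v/√p : v ∈ ℤ^{Nm}, v mod p ∈ C}`. For two such vectors
`b(v/√p, v'/√p) = v g v'ᵀ / p`, and `v g v'ᵀ ≡ β(c, c') (mod p)` by the compatibility of `g`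
with `β`, so the pairing is integral exactly when `β(c, c') = 0`: the vectors of
`(1/√p)ℤ^{Nm}` in `Λ(C)^*` form `Λ(C^⊥)`. Since `0 ∈ C`, `Λ(C)` contains `√p ℤ^{Nm}`, so every
`λ ∈ Λ(C)^*` has `√p · gλ` integral, and unimodularity of `g` puts `λ` in `(1/√p)ℤ^{Nm}`.
Hence `Λ(C)^* = Λ(C^⊥)`, and `v ↦ v/√p` turns self-duality of `C` into that of `Λ(C)`. -/

open Matrix

section PiProdBasis

variable {R M ι : Type*} [Semiring R] [AddCommMonoid M] [Module R M]

def Module.Basis.piProd (η : Type*) [Fintype η] (e : Module.Basis ι R M) :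
    Module.Basis (η × ι) R (η → M) :=
  (Pi.basis fun _ : η => e).reindex (Equiv.sigmaEquivProd η ι)

@[simp]
theorem Module.Basis.piProd_apply {η : Type*} [Fintype η] [DecidableEq η] (e : Module.Basis ι R M) (x : η × ι) :
    e.piProd η x = Pi.single x.1 (e x.2) := by
  simp [Module.Basis.piProd]

@[simp]
theorem Module.Basis.piProd_repr {η : Type*} [Fintype η] (e : Module.Basis ι R M) (c : η → M) (x : η × ι) :
    (e.piProd η).repr c x = e.repr (c x.1) x.2 := by
  simp [Module.Basis.piProd]

end PiProdBasis

theorem Matrix.exists_intCast_eq_of_isUnit_det {ι : Type*} [Fintype ι] [DecidableEq ι]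
    {g : Matrix ι ι ℤ} (hg : IsUnit g.det) {u : ι → ℝ}
    (hu : ∀ x, ∃ z : ℤ, (g.map (Int.cast : ℤ → ℝ) *ᵥ u) x = z) :
    ∃ v : ι → ℤ, ∀ x, u x = v x := by
  choose z hz using hu
  let := invertibleOfIsUnitDet g hg
  refine ⟨⅟g *ᵥ z, fun x => ?_⟩
  have hinv : (⅟g).map (Int.cast : ℤ → ℝ) * g.map Int.cast = 1 := by
    have h := congrArg (Int.castRingHom ℝ).mapMatrix (invOf_mul_self g)
    rwa [map_mul, map_one] at h
  calc u x = (((⅟g).map (Int.cast : ℤ → ℝ) * g.map Int.cast) *ᵥ u) x := by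
        rw [hinv, one_mulVec]
    _ = ((⅟g).map (Int.cast : ℤ → ℝ) *ᵥ (Int.cast ∘ z)) x := by
      rw [← mulVec_mulVec]; congr 2; exact funext hz
    _ = ((⅟g *ᵥ z) x : ℝ) := (RingHom.map_mulVec (Int.castRingHom ℝ) _ _ x).symm

theorem exists_intCast_eq_div_iff {p : ℕ} (hp : p ≠ 0) (k : ℤ) :
    (∃ z : ℤ, (k : ℝ) / p = z) ↔ (k : ZMod p) = 0 := by
  have hp' : (p : ℝ) ≠ 0 := by exact_mod_cast hp
  rw [ZMod.intCast_zmod_eq_zero_iff_dvd]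
  refine exists_congr fun z => ?_
  rw [div_eq_iff hp', mul_comm]
  exact_mod_cast Iff.rfl

theorem bForm_eq_dotProduct_mulVec {N m : ℕ} (g : Matrix (Fin N × Fin m) (Fin N × Fin m) ℤ)
    (lam lam' : Fin N × Fin m → ℝ) :
    bForm g lam lam' = lam ⬝ᵥ (g.map (Int.cast : ℤ → ℝ) *ᵥ lam') := by
  simp only [bForm, dotProduct, mulVec, map_apply, Finset.mul_sum, mul_assoc]

def scaleVec (p : ℕ) {ι : Type*} (v : ι → ℤ) : ι → ℝ := fun x => v x / Real.sqrt p

theorem bForm_scaleVec {p m N : ℕ} (g : Matrix (Fin N × Fin m) (Fin N × Fin m) ℤ)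
    (v v' : Fin N × Fin m → ℤ) :
    bForm g (scaleVec p v) (scaleVec p v') = ((∑ x, ∑ y, v x * g x y * v' y : ℤ) : ℝ) / p := by
  have hp : (0 : ℝ) ≤ p := Nat.cast_nonneg p
  simp only [bForm, scaleVec, Int.cast_sum, Int.cast_mul, Finset.sum_div]
  refine Finset.sum_congr rfl fun x _ => Finset.sum_congr rfl fun y _ => ?_
  field_simp
  rw [Real.sq_sqrt hp]

theorem scaleVec_single_natCast {p : ℕ} {ι : Type*} [DecidableEq ι] (x₀ : ι) :
    scaleVec p (Pi.single x₀ (p : ℤ)) = Pi.single x₀ (Real.sqrt p) := by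
  funext x
  rcases eq_or_ne x x₀ with rfl | hx
  · simp [scaleVec, Real.div_sqrt]
  · simp [scaleVec, hx]

section ConstructionA

variable {p m N : ℕ} [Fact p.Prime] (e : Module.Basis (Fin m) (ZMod p) (GaloisField p m))

theorem scaleVec_injective {ι : Type*} : Function.Injective (scaleVec p (ι := ι)) := by
  intro v w h
  have hs : Real.sqrt p ≠ 0 := Real.sqrt_ne_zero'.2 (Nat.cast_pos.2 (Fact.out : p.Prime).pos)
  funext x
  exact_mod_cast (div_left_inj' hs).1 (congrFun h x)

def reduceWord (v : Fin N × Fin m → ℤ) : Fin N → GaloisField p m :=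
  (e.piProd (Fin N)).equivFun.symm fun x => (v x : ZMod p)

def liftWord (c : Fin N → GaloisField p m) : Fin N × Fin m → ℤ :=
  fun x => ((e.piProd (Fin N)).repr c x).val

theorem reduceWord_eq_iff (v : Fin N × Fin m → ℤ) (c : Fin N → GaloisField p m) :
    reduceWord e v = c ↔ ∀ x, (v x : ZMod p) = (e.piProd (Fin N)).repr c x := by
  rw [reduceWord, LinearEquiv.symm_apply_eq, funext_iff]
  rfl

theorem intCast_liftWord (c : Fin N → GaloisField p m) (x : Fin N × Fin m) :
    (liftWord e c x : ZMod p) = (e.piProd (Fin N)).repr c x := by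
  simp [liftWord]

theorem piProd_repr_reduceWord (v : Fin N × Fin m → ℤ) (x : Fin N × Fin m) :
    (e.piProd (Fin N)).repr (reduceWord e v) x = v x :=
  ((reduceWord_eq_iff e v _).1 rfl x).symm

theorem reduceWord_liftWord (c : Fin N → GaloisField p m) : reduceWord e (liftWord e c) = c :=
  (reduceWord_eq_iff e _ c).2 (intCast_liftWord e c)

theorem reduceWord_surjective : Function.Surjective (reduceWord (N := N) e) :=
  fun c => ⟨liftWord e c, reduceWord_liftWord e c⟩

theorem reduceWord_eq_iff_exists_eq_liftWord_add (v : Fin N × Fin m → ℤ)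
    (c : Fin N → GaloisField p m) :
    reduceWord e v = c ↔ ∃ l : Fin N × Fin m → ℤ, v = liftWord e c + (p : ℤ) • l := by
  have hx : ∀ x, (v x : ZMod p) = (e.piProd (Fin N)).repr c x ↔
      ∃ k : ℤ, v x = liftWord e c x + p * k := fun x => by
    rw [← intCast_liftWord, eq_comm, ZMod.intCast_eq_intCast_iff_dvd_sub]
    exact exists_congr fun k => sub_eq_iff_eq_add'
  rw [reduceWord_eq_iff, forall_congr' hx, Classical.skolem]
  simp only [funext_iff, Pi.add_apply, Pi.smul_apply, smul_eq_mul]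

theorem latticeF_eq_image (C : Set (Fin N → GaloisField p m)) :
    latticeF p m N e C = scaleVec p '' (reduceWord e ⁻¹' C) := by
  ext lam
  constructor
  · rintro ⟨c, hc, l, hl⟩
    refine ⟨liftWord e c + (p : ℤ) • l, ?_, funext fun x => ?_⟩
    · rwa [Set.mem_preimage, (reduceWord_eq_iff_exists_eq_liftWord_add e _ c).2 ⟨l, rfl⟩]
    · simp [scaleVec, hl x, liftWord]
  · rintro ⟨v, hv, rfl⟩
    generalize hc : reduceWord e v = c at hv
    obtain ⟨l, rfl⟩ := (reduceWord_eq_iff_exists_eq_liftWord_add e v c).1 hc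
    exact ⟨c, hc ▸ hv, l, fun x => by simp [scaleVec, liftWord]⟩

theorem intCast_sum_mul_eq_apply_reduceWord
    (g : Matrix (Fin N × Fin m) (Fin N × Fin m) ℤ)
    (β : (Fin N → GaloisField p m) →ₗ[ZMod p] (Fin N → GaloisField p m) →ₗ[ZMod p] ZMod p)
    (hβ : ∀ x y, (g x y : ZMod p) = β (e.piProd (Fin N) x) (e.piProd (Fin N) y))
    (v v' : Fin N × Fin m → ℤ) :
    ((∑ x, ∑ y, v x * g x y * v' y : ℤ) : ZMod p) = β (reduceWord e v) (reduceWord e v') := by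
  rw [← toLinearMap₂_toMatrix₂ (e.piProd (Fin N)) (e.piProd (Fin N)) β, toLinearMap₂_apply]
  simp only [piProd_repr_reduceWord, LinearMap.toMatrix₂_apply, ← hβ, smul_eq_mul]
  push_cast
  refine Finset.sum_congr rfl fun x _ => Finset.sum_congr rfl fun y _ => ?_
  ring

theorem exists_intCast_eq_bForm_scaleVec_iff
    (g : Matrix (Fin N × Fin m) (Fin N × Fin m) ℤ)
    (β : (Fin N → GaloisField p m) →ₗ[ZMod p] (Fin N → GaloisField p m) →ₗ[ZMod p] ZMod p)
    (hβ : ∀ x y, (g x y : ZMod p) = β (e.piProd (Fin N) x) (e.piProd (Fin N) y))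
    (v v' : Fin N × Fin m → ℤ) :
    (∃ z : ℤ, bForm g (scaleVec p v) (scaleVec p v') = z) ↔
      β (reduceWord e v) (reduceWord e v') = 0 := by
  rw [bForm_scaleVec, exists_intCast_eq_div_iff (Fact.out : p.Prime).ne_zero,
    intCast_sum_mul_eq_apply_reduceWord e g β hβ]

theorem latticeF_subset_range_scaleVec (C : Set (Fin N → GaloisField p m)) :
    latticeF p m N e C ⊆ Set.range (scaleVec p) :=
  latticeF_eq_image e C ▸ Set.image_subset_range _ _

theorem scaleVec_mem_latticeF_iff (C : Set (Fin N → GaloisField p m)) (v : Fin N × Fin m → ℤ) :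
    scaleVec p v ∈ latticeF p m N e C ↔ reduceWord e v ∈ C := by
  rw [latticeF_eq_image, scaleVec_injective.mem_set_image, Set.mem_preimage]

theorem scaleVec_mem_dualLatticeF_iff (C : Set (Fin N → GaloisField p m))
    (g : Matrix (Fin N × Fin m) (Fin N × Fin m) ℤ)
    (β : (Fin N → GaloisField p m) →ₗ[ZMod p] (Fin N → GaloisField p m) →ₗ[ZMod p] ZMod p)
    (hβ : ∀ x y, (g x y : ZMod p) = β (e.piProd (Fin N) x) (e.piProd (Fin N) y))
    (v : Fin N × Fin m → ℤ) :
    scaleVec p v ∈ dualLatticeF g (latticeF p m N e C) ↔ ∀ c ∈ C, β c (reduceWord e v) = 0 := by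
  simp only [dualLatticeF, latticeF_eq_image, Set.forall_mem_image, Set.mem_ofPred_eq,
    Set.mem_preimage, exists_intCast_eq_bForm_scaleVec_iff e g β hβ]
  exact ((reduceWord_surjective e).forall (p := fun c => c ∈ C → β c (reduceWord e v) = 0)).symm

theorem dualLatticeF_latticeF_subset_range_scaleVec {C : Set (Fin N → GaloisField p m)}
    (hC : 0 ∈ C) {g : Matrix (Fin N × Fin m) (Fin N × Fin m) ℤ} (hg : IsUnit g.det) :
    dualLatticeF g (latticeF p m N e C) ⊆ Set.range (scaleVec p) := by
  intro lam hlam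
  have hmem : ∀ x₀, scaleVec p (Pi.single x₀ (p : ℤ)) ∈ latticeF p m N e C := fun x₀ => by
    rw [scaleVec_mem_latticeF_iff]
    convert hC
    refine (reduceWord_eq_iff e _ 0).2 fun x => ?_
    rcases eq_or_ne x x₀ with rfl | hx
    · simp
    · simp [hx]
  have hint : ∀ x₀, ∃ z : ℤ, (g.map (Int.cast : ℤ → ℝ) *ᵥ (Real.sqrt p • lam)) x₀ = z :=
    fun x₀ => by
      obtain ⟨z, hz⟩ := hlam _ (hmem x₀)
      rw [bForm_eq_dotProduct_mulVec, scaleVec_single_natCast, single_dotProduct] at hz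
      exact ⟨z, by rw [mulVec_smul, Pi.smul_apply, smul_eq_mul, hz]⟩
  obtain ⟨v, hv⟩ := exists_intCast_eq_of_isUnit_det hg hint
  have hp : Real.sqrt p ≠ 0 := Real.sqrt_ne_zero'.2 (Nat.cast_pos.2 (Fact.out : p.Prime).pos)
  refine ⟨v, funext fun x => ?_⟩
  rw [scaleVec, ← hv x, Pi.smul_apply, smul_eq_mul, mul_div_cancel_left₀ _ hp]

end ConstructionA

theorem latticeF_self_dual_iff_general (p m N : ℕ) [Fact p.Prime]
    (e : Module.Basis (Fin m) (ZMod p) (GaloisField p m))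
    (C : AddSubgroup (Fin N → GaloisField p m))
    (g : Matrix (Fin N × Fin m) (Fin N × Fin m) ℤ)
    (hg_uni : IsUnit g.det)
    (β : (Fin N → GaloisField p m) →ₗ[ZMod p]
          (Fin N → GaloisField p m) →ₗ[ZMod p] ZMod p)
    (hcompat : ∀ (i j : Fin N) (t s : Fin m),
      ((g (i, t) (j, s) : ZMod p)) = β (Pi.single i (e t)) (Pi.single j (e s))) :
    latticeF p m N e (C : Set _) = dualLatticeF g (latticeF p m N e (C : Set _)) ↔
      (C : Set _) = { c' | ∀ c ∈ C, β c c' = 0 } := by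
  have hβ : ∀ x y, (g x y : ZMod p) = β (e.piProd (Fin N) x) (e.piProd (Fin N) y) :=
    fun x y => by simpa using hcompat x.1 y.1 x.2 y.2
  have hmem (v : Fin N × Fin m → ℤ) : scaleVec p v ∈ dualLatticeF g (latticeF p m N e (C : Set _)) ↔
      reduceWord e v ∈ { c' | ∀ c ∈ C, β c c' = 0 } :=
    scaleVec_mem_dualLatticeF_iff e _ g β hβ v
  constructor
  · refine fun h => Set.ext fun c => ?_
    obtain ⟨v, rfl⟩ := reduceWord_surjective e c
    rw [← hmem, ← h, scaleVec_mem_latticeF_iff]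
  · intro h
    refine Set.Subset.antisymm (fun lam hlam => ?_) (fun lam hlam => ?_)
    · obtain ⟨v, rfl⟩ := latticeF_subset_range_scaleVec e _ hlam
      rwa [hmem, ← h, ← scaleVec_mem_latticeF_iff]
    · obtain ⟨v, rfl⟩ := dualLatticeF_latticeF_subset_range_scaleVec e C.zero_mem hg_uni hlam
      rwa [scaleVec_mem_latticeF_iff, h, ← hmem]

theorem latticeF_self_dual_iff (p m N : ℕ) [Fact p.Prime]
    (e : Module.Basis (Fin m) (ZMod p) (GaloisField p m))
    (tr : GaloisField p m →ₗ[ZMod p] ZMod p)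
    (htr : ∀ t s : Fin m, tr (e t * e s) = if t = s then 1 else 0)
    (C : AddSubgroup (Fin N → GaloisField p m))
    (g : Matrix (Fin N × Fin m) (Fin N × Fin m) ℤ)
    (hg_symm : g.IsSymm) (hg_uni : IsUnit g.det)
    (β : (Fin N → GaloisField p m) →ₗ[ZMod p]
          (Fin N → GaloisField p m) →ₗ[ZMod p] ZMod p)
    (hβ_symm : ∀ c c', β c c' = β c' c)
    (hcompat : ∀ (i j : Fin N) (t s : Fin m),
      ((g (i, t) (j, s) : ZMod p)) = β (Pi.single i (e t)) (Pi.single j (e s))) :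
    latticeF p m N e (C : Set _) = dualLatticeF g (latticeF p m N e (C : Set _)) ↔
      (C : Set _) = { c' | ∀ c ∈ C, β c c' = 0 } :=
  latticeF_self_dual_iff_general p m N e C g hg_uni β hcompat

end
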